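/- arXiv:1511.03082 — 5 statements merged into one kernel-verified Lean document; each statement's English description precedes it below -/
import Mathlib

section
/- Let f : ℝ → ℂ be a Schwartz function, b ∈ ℝ, and a > 0. Then for every a′ > 0 the principal value defining W₁(a′,b) exists, and the function a′ ↦ W₁(a′,b) is differentiable at a with derivative ∂W₁/∂a (a,b) = −(3/(2π a²))·∫_ℝ f(t)·e^{3πi(t−b)/a} dt. -/
open Real Complex MeasureTheory Filter Set Asymptotics Topology

/-!
Subtracting `f b` on the unit ball around `b` from the numerator changes no truncated integral
`∫_{|t-b| ≥ ε}`, because `1 / (t - b)` is odd about `b`; what remains is bounded near `b`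
(as `f` is differentiable there) and dominated by `‖f‖` away from `b`, hence integrable, and the
principal value is its Lebesgue integral. The subtracted term does not depend on the scale `a'`,
so differentiating under the integral sign only hits the phase `e^{3πi(t-b)/a'}`, whose
`a'`-derivative carries a factor `t - b` that cancels the singular denominator.
-/

noncomputable section

theorem integral_eq_zero_of_odd_about {E : Type*} [NormedAddCommGroup E] [NormedSpace ℝ E]
    {F : ℝ → E} (b : ℝ) (hF : ∀ t, F (2 * b - t) = -F t) : ∫ t, F t = 0 := by
  have h : ∫ t, F t = -∫ t, F t := by
    calc ∫ t, F t = ∫ t, F (2 * b - t) := (integral_sub_left_eq_self F volume (2 * b)).symm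
      _ = -∫ t, F t := by simp only [hF, integral_neg]
  have h2 : (2 : ℝ) • ∫ t, F t = 0 := by rw [two_smul]; nth_rw 1 [h]; exact neg_add_cancel _
  exact (smul_eq_zero.1 h2).resolve_left two_ne_zero

theorem measurableSet_le_abs_sub (ε b : ℝ) : MeasurableSet {t : ℝ | ε ≤ |t - b|} :=
  measurableSet_le measurable_const (by fun_prop)

theorem tendsto_setIntegral_abs_sub_ge {E : Type*} [NormedAddCommGroup E] [NormedSpace ℝ E]
    {F : ℝ → E} (hF : Integrable F) (b : ℝ) :
    Tendsto (fun ε => ∫ t in {t | ε ≤ |t - b|}, F t) (𝓝 0) (𝓝 (∫ t, F t)) := by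
  simp_rw [← integral_indicator (measurableSet_le_abs_sub _ b)]
  refine tendsto_integral_filter_of_dominated_convergence (fun t => ‖F t‖)
    (.of_forall fun ε => hF.1.indicator (measurableSet_le_abs_sub ε b))
    (.of_forall fun ε => ae_of_all _ fun t => norm_indicator_le_norm_self _ _) hF.norm ?_
  filter_upwards [Measure.ae_ne volume b] with t ht
  refine tendsto_const_nhds.congr' ?_
  filter_upwards [gt_mem_nhds (abs_pos.2 (sub_ne_zero.2 ht))] with ε hε
  exact (indicator_of_mem (s := {t | ε ≤ |t - b|}) hε.le F).symm

theorem norm_ofReal_sub_ofReal (t b : ℝ) : ‖(t : ℂ) - b‖ = |t - b| := by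
  rw [← ofReal_sub, norm_real, Real.norm_eq_abs]

theorem MeasureTheory.AEStronglyMeasurable.div_ofReal_sub {ψ : ℝ → ℂ} {μ : Measure ℝ}
    (hψ : AEStronglyMeasurable ψ μ) (b : ℝ) :
    AEStronglyMeasurable (fun t => ψ t / ((t : ℂ) - b)) μ :=
  hψ.mul (by fun_prop : Measurable fun t : ℝ => ((t : ℂ) - b)⁻¹).aestronglyMeasurable

theorem integrableOn_div_sub {ψ : ℝ → ℂ} (hψ : Integrable ψ) {b ε : ℝ} (hε : 0 < ε) :
    IntegrableOn (fun t => ψ t / ((t : ℂ) - b)) {t | ε ≤ |t - b|} := by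
  refine Integrable.mono' (hψ.norm.div_const ε).restrict
    (hψ.aestronglyMeasurable.div_ofReal_sub b).restrict ?_
  refine (ae_restrict_iff' (measurableSet_le_abs_sub ε b)).2
    (ae_of_all _ fun t (ht : ε ≤ |t - b|) => ?_)
  rw [norm_div, norm_ofReal_sub_ofReal]
  exact div_le_div_of_nonneg_left (norm_nonneg _) hε ht

theorem integrable_div_sub_of_isBigO {ψ : ℝ → ℂ} {b : ℝ} (hψ : Integrable ψ)
    (hb : ψ =O[𝓝 b] (· - b)) : Integrable (fun t => ψ t / ((t : ℂ) - b)) := by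
  obtain ⟨C, hC0, hC⟩ := hb.exists_nonneg
  obtain ⟨δ, hδ, hnear⟩ := Metric.eventually_nhds_iff.1 hC.bound
  have hnear_int : IntegrableOn (fun t => ψ t / ((t : ℂ) - b)) (Metric.ball b δ) := by
    refine Integrable.mono' (integrableOn_const measure_ball_lt_top.ne (C := C))
      (hψ.aestronglyMeasurable.div_ofReal_sub b).restrict ?_
    refine (ae_restrict_iff' Metric.isOpen_ball.measurableSet).2 (ae_of_all _ fun t ht => ?_)
    rcases eq_or_ne t b with rfl | htb
    · simpa using hC0
    · have hpos : 0 < |t - b| := abs_pos.2 (sub_ne_zero.2 htb)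
      rw [norm_div, norm_ofReal_sub_ofReal, div_le_iff₀ hpos]
      simpa using hnear ht
  have hfar_int : IntegrableOn (fun t => ψ t / ((t : ℂ) - b)) {t | δ ≤ |t - b|} :=
    integrableOn_div_sub hψ hδ
  have hcover : Metric.ball b δ ∪ {t | δ ≤ |t - b|} = univ := by
    ext t
    simp [Real.dist_eq, lt_or_ge]
  simpa [hcover] using hnear_int.union hfar_int

theorem integrable_indicator_closedBall_const (b r : ℝ) (c : ℂ) :
    Integrable ((Metric.closedBall b r).indicator fun _ => c) :=
  (integrable_indicator_iff measurableSet_closedBall).2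
    (integrableOn_const measure_closedBall_lt_top.ne)

theorem setIntegral_indicator_div_sub_eq_zero (b r ε : ℝ) (c : ℂ) :
    ∫ t in {t | ε ≤ |t - b|}, (Metric.closedBall b r).indicator (fun _ => c) t / ((t : ℂ) - b)
      = 0 := by
  rw [← integral_indicator (measurableSet_le_abs_sub ε b)]
  refine integral_eq_zero_of_odd_about b fun t => ?_
  have hdist : |2 * b - t - b| = |t - b| := by rw [← abs_neg]; ring_nf
  have hball : 2 * b - t ∈ Metric.closedBall b r ↔ t ∈ Metric.closedBall b r := by
    simp only [Metric.mem_closedBall, Real.dist_eq, hdist]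
  have hind : (Metric.closedBall b r).indicator (fun _ => c) (2 * b - t)
      = (Metric.closedBall b r).indicator (fun _ => c) t := by
    by_cases h : t ∈ Metric.closedBall b r <;> simp [h, hball]
  have hsub : ((2 * b - t : ℝ) : ℂ) - b = -((t : ℂ) - b) := by push_cast; ring
  simp only [indicator_apply, mem_ofPred_eq, hdist, hind, hsub, div_neg]
  split_ifs <;> simp

variable {φ : ℝ → ℂ} {b : ℝ}

def pvIntegrand (φ : ℝ → ℂ) (b t : ℝ) : ℂ :=
  (φ t - (Metric.closedBall b 1).indicator (fun _ => φ b) t) / ((t : ℂ) - b)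

theorem integrable_pvIntegrand (hφ : Integrable φ) (hb : (φ · - φ b) =O[𝓝 b] (· - b)) :
    Integrable (pvIntegrand φ b) := by
  refine integrable_div_sub_of_isBigO (hφ.sub (integrable_indicator_closedBall_const b 1 (φ b)))
    (hb.congr' ?_ EventuallyEq.rfl)
  filter_upwards [Metric.closedBall_mem_nhds b one_pos] with t ht
  rw [indicator_of_mem ht]

theorem setIntegral_pvIntegrand {ε : ℝ} (hφ : Integrable φ) (hε : 0 < ε) :
    ∫ t in {t | ε ≤ |t - b|}, pvIntegrand φ b t
      = ∫ t in {t | ε ≤ |t - b|}, φ t / ((t : ℂ) - b) := by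
  simp only [pvIntegrand, sub_div]
  rw [integral_sub (integrableOn_div_sub hφ hε)
    (integrableOn_div_sub (integrable_indicator_closedBall_const b 1 (φ b)) hε),
    setIntegral_indicator_div_sub_eq_zero, sub_zero]

theorem tendsto_setIntegral_div_sub (hφ : Integrable φ) (hb : (φ · - φ b) =O[𝓝 b] (· - b)) :
    Tendsto (fun ε => ∫ t in {t | ε ≤ |t - b|}, φ t / ((t : ℂ) - b)) (𝓝[>] 0)
      (𝓝 (∫ t, pvIntegrand φ b t)) := by
  refine ((tendsto_setIntegral_abs_sub_ge (integrable_pvIntegrand hφ hb) b).mono_left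
    nhdsWithin_le_nhds).congr' ?_
  filter_upwards [self_mem_nhdsWithin] with ε hε
  exact setIntegral_pvIntegrand hφ hε

variable {f : ℝ → ℂ} {ω : ℝ}

def modulate (f : ℝ → ℂ) (ω b x t : ℝ) : ℂ :=
  f t * cexp (ω * I * (t - b) / x)

theorem norm_modulate (x t : ℝ) : ‖modulate f ω b x t‖ = ‖f t‖ := by
  rw [modulate, norm_mul, norm_exp, ← ofReal_sub]
  simp [div_re]

theorem integrable_modulate (hf : Integrable f) (x : ℝ) : Integrable (modulate f ω b x) :=
  hf.congr' (hf.aestronglyMeasurable.mul (by fun_prop))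
    (ae_of_all _ fun t => (norm_modulate x t).symm)

theorem isBigO_modulate_sub (hfb : DifferentiableAt ℝ f b) (x : ℝ) :
    (modulate f ω b x · - modulate f ω b x b) =O[𝓝 b] (· - b) := by
  have : DifferentiableAt ℝ (modulate f ω b x) b := by unfold modulate; fun_prop
  exact this.hasDerivAt.isBigO_sub

theorem hasDerivAt_pvIntegrand_modulate {x t : ℝ} (hx : x ≠ 0) (ht : t ≠ b) :
    HasDerivAt (fun x => pvIntegrand (modulate f ω b x) b t)
      (-(ω * I / x ^ 2) * modulate f ω b x t) x := by
  set w : ℂ := ω * I * (t - b)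
  set c : ℂ := (Metric.closedBall b 1).indicator (fun _ => f b) t
  have htb : (t : ℂ) - b ≠ 0 := sub_ne_zero.2 (ofReal_injective.ne ht)
  have hx' : (x : ℂ) ≠ 0 := ofReal_ne_zero.2 hx
  have hfun : (fun y : ℝ => pvIntegrand (modulate f ω b y) b t)
      = fun y : ℝ => (f t * cexp (w * (y : ℂ)⁻¹) - c) / ((t : ℂ) - b) := by
    funext y
    simp [pvIntegrand, modulate, w, c, div_eq_mul_inv]
  rw [hfun]
  convert (((((hasDerivAt_inv hx').const_mul w).cexp.const_mul (f t)).sub_const c).div_const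
    ((t : ℂ) - b)).comp_ofReal using 1
  simp only [modulate, w]
  field_simp

theorem hasDerivAt_integral_pvIntegrand_modulate {a : ℝ} (hf : Integrable f)
    (hfb : DifferentiableAt ℝ f b) (ha : a ≠ 0) :
    HasDerivAt (fun x => ∫ t, pvIntegrand (modulate f ω b x) b t)
      (-(ω * I / a ^ 2) * ∫ t, modulate f ω b a t) a := by
  have hK : ∀ x, Integrable (pvIntegrand (modulate f ω b x) b) := fun x =>
    integrable_pvIntegrand (integrable_modulate hf x) (isBigO_modulate_sub hfb x)
  have hnear : ∀ x ∈ Metric.ball a (|a| / 2), |a| / 2 < |x| := fun x hx => by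
    have := abs_sub_abs_le_abs_sub a x
    rw [Metric.mem_ball, Real.dist_eq, abs_sub_comm] at hx
    linarith
  have hbound : ∀ t, ∀ x ∈ Metric.ball a (|a| / 2),
      ‖-(ω * I / x ^ 2) * modulate f ω b x t‖ ≤ 4 * |ω| / a ^ 2 * ‖f t‖ := fun t x hx => by
    have hx2 : a ^ 2 / 4 ≤ x ^ 2 := by
      have := hnear x hx
      nlinarith [sq_abs x, sq_abs a, abs_nonneg a]
    rw [norm_mul, norm_modulate, norm_neg, norm_div, norm_mul, norm_I, mul_one, norm_pow,
      norm_real, Real.norm_eq_abs, norm_real, Real.norm_eq_abs, sq_abs]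
    calc |ω| / x ^ 2 * ‖f t‖ ≤ |ω| / (a ^ 2 / 4) * ‖f t‖ := by gcongr
      _ = 4 * |ω| / a ^ 2 * ‖f t‖ := by ring
  have hderiv := hasDerivAt_integral_of_dominated_loc_of_deriv_le
    (F := fun x t => pvIntegrand (modulate f ω b x) b t)
    (Metric.ball_mem_nhds a (half_pos (abs_pos.2 ha)))
    (.of_forall fun x => (hK x).aestronglyMeasurable) (hK a)
    ((integrable_modulate hf a).const_mul _).aestronglyMeasurable
    (ae_of_all _ hbound) (hf.norm.const_mul _) ?_
  · simpa only [integral_const_mul] using hderiv.2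
  filter_upwards [Measure.ae_ne volume b] with t ht x hx
  have hx0 : x ≠ 0 := abs_pos.1 ((half_pos (abs_pos.2 ha)).trans (hnear x hx))
  exact hasDerivAt_pvIntegrand_modulate hx0 ht

end

/-- **Scale derivative of `W₁`.**
For a Schwartz function `f`, `b ∈ ℝ` and `a > 0`: the principal value
`W₁(a′,b) = −(i/(2π²))·PV∫ f(t)·e^{3πi(t−b)/a′}/(t−b) dt` exists for every `a′ > 0`,
and `a′ ↦ W₁(a′,b)` is differentiable at `a` with derivative
`−(3/(2π a²))·∫ f(t)·e^{3πi(t−b)/a} dt`. -/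
theorem hasDerivAt_W1_scale (f : SchwartzMap ℝ ℂ) (b : ℝ) (a : ℝ) (ha : 0 < a) :
    ∃ W₁ : ℝ → ℂ,
      (∀ a' : ℝ, 0 < a' →
        Tendsto (fun ε : ℝ =>
            -(Complex.I / (2 * (Real.pi : ℂ) ^ 2)) * ∫ t in {t : ℝ | ε ≤ |t - b|},
              f t * Complex.exp (3 * Real.pi * Complex.I * (t - b) / a') / ((t : ℂ) - b))
          (nhdsWithin 0 (Ioi 0)) (nhds (W₁ a'))) ∧
      HasDerivAt W₁
        (-(3 / (2 * (Real.pi : ℂ) * a ^ 2)) *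
          ∫ t : ℝ, f t * Complex.exp (3 * Real.pi * Complex.I * (t - b) / a)) a := by
  have hmod : ∀ x t, modulate f (3 * π) b x t
      = f t * Complex.exp (3 * Real.pi * Complex.I * (t - b) / x) := by
    simp [modulate]
  have hfb : DifferentiableAt ℝ f b := f.differentiableAt
  refine ⟨fun x => -(I / (2 * (π : ℂ) ^ 2)) * ∫ t, pvIntegrand (modulate f (3 * π) b x) b t,
    fun x _ => ?_, ?_⟩
  · have hpv := (tendsto_setIntegral_div_sub (integrable_modulate (ω := 3 * π) f.integrable x)
      (isBigO_modulate_sub hfb x)).const_mul (-(I / (2 * (π : ℂ) ^ 2)))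
    simpa only [hmod] using hpv
  · have hconst : -(I / (2 * (π : ℂ) ^ 2)) * -(((3 * π : ℝ) : ℂ) * I / (a : ℂ) ^ 2)
        = -(3 / (2 * (π : ℂ) * a ^ 2)) := by
      have : (π : ℂ) ≠ 0 := ofReal_ne_zero.2 pi_ne_zero
      push_cast
      field_simp
      simp [I_sq]
      ring
    have hderiv := (hasDerivAt_integral_pvIntegrand_modulate (ω := 3 * π) f.integrable hfb
      ha.ne').const_mul (-(I / (2 * (π : ℂ) ^ 2)))
    rw [← mul_assoc, hconst] at hderiv
    simpa only [hmod] using hderiv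
end

section
/- Let f : ℝ → ℂ be a Schwartz function and let D(a,b) = ∂W₁/∂a (a,b) denote the partial derivative of W₁ with respect to the scale variable a. Then for every a > 0 and b ∈ ℝ, D is differentiable in b and satisfies the hyperbolic equation ∂D/∂b (a,b) + (3πi/a)·D(a,b) = 0; i.e. W₁ satisfies ∂²W₁/(∂a ∂b) + (3πi/a)·∂W₁/∂a = 0. -/
open Real Complex MeasureTheory

/-- **Hyperbolic PDE for `W₁`.**
For a Schwartz function `f`, let `D(a,b) = ∂W₁/∂a (a,b) = −(3/(2π a²))·∫ f(t)·e^{3πi(t−b)/a} dt`.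
Then for every `a > 0` and `b ∈ ℝ`, `D` is differentiable in `b` with
`∂D/∂b (a,b) = −(3πi/a)·D(a,b)`, i.e. `∂²W₁/(∂a∂b) + (3πi/a)·∂W₁/∂a = 0`. -/
theorem W1_hyperbolic_pde (f : SchwartzMap ℝ ℂ) (a b : ℝ) (ha : 0 < a) :
    HasDerivAt
      (fun b' : ℝ => -(3 / (2 * (Real.pi : ℂ) * a ^ 2)) *
        ∫ t : ℝ, f t * Complex.exp (3 * Real.pi * Complex.I * (t - b') / a))
      (-(3 * Real.pi * Complex.I / a) *
        (-(3 / (2 * (Real.pi : ℂ) * a ^ 2)) *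
          ∫ t : ℝ, f t * Complex.exp (3 * Real.pi * Complex.I * (t - b) / a))) b := by
  set K : ℂ := -(3 / (2 * (Real.pi : ℂ) * a ^ 2)) with hK
  set c : ℂ := 3 * Real.pi * Complex.I / a with hc
  set I0 : ℂ := ∫ t : ℝ, f t * Complex.exp (c * t) with hI0
  have hfun : ∀ b' : ℝ,
      (∫ t : ℝ, f t * Complex.exp (3 * Real.pi * Complex.I * (t - b') / a))
        = I0 * Complex.exp (-c * b') := by
    intro b'
    rw [hI0, ← MeasureTheory.integral_mul_const]
    congr 1
    ext t
    have h : (3 : ℂ) * Real.pi * Complex.I * (t - b') / a = c * t + -c * b' := by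
      rw [hc]; ring
    rw [h, Complex.exp_add]; ring
  have hexp : HasDerivAt (fun z : ℂ => Complex.exp (-c * z))
      (Complex.exp (-c * b) * -c) (b : ℂ) :=
    ((hasDerivAt_id (b : ℂ)).const_mul (-c)).cexp.congr_deriv (by simp only [id_eq]; ring)
  have hexp' : HasDerivAt (fun b' : ℝ => Complex.exp (-c * b'))
      (Complex.exp (-c * b) * -c) b := hexp.comp_ofReal
  have hmain : HasDerivAt (fun b' : ℝ => K * (I0 * Complex.exp (-c * b')))
      ((K * I0) * (Complex.exp (-c * b) * -c)) b := by
    simpa only [mul_assoc] using hexp'.const_mul (K * I0)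
  simp only [hfun]
  convert hmain using 1
  ring
end

section
/- Let f : ℝ → ℂ be a Schwartz function and let D(a,b) = ∂W₂/∂a (a,b) denote the partial derivative of W₂ with respect to the scale variable a. Then for every a > 0 and b ∈ ℝ, D is differentiable in b and satisfies the hyperbolic equation ∂D/∂b (a,b) + (πi/a)·D(a,b) = 0; i.e. W₂ satisfies ∂²W₂/(∂a ∂b) + (πi/a)·∂W₂/∂a = 0. -/
open Real Complex MeasureTheory

/-! Shifting `b` only multiplies the integrand by the constant `e^{-πib/a}`, so `∂W₂/∂a (a, ·)`
is a constant multiple of `b ↦ e^{-πib/a}`, whose derivative is `-(πi/a)` times itself. -/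

section Translation

variable {μ : Measure ℝ} (g : ℝ → ℂ) (c : ℂ)

theorem integral_mul_cexp_mul_sub (s : ℝ) :
    ∫ t, g t * exp (c * (t - s)) ∂μ = (∫ t, g t * exp (c * t) ∂μ) * exp (-c * s) := by
  rw [← integral_mul_const]
  congr 1 with t
  rw [mul_assoc, ← Complex.exp_add]
  ring_nf

theorem hasDerivAt_integral_mul_cexp_mul_sub (s : ℝ) :
    HasDerivAt (fun s : ℝ => ∫ t, g t * exp (c * (t - s)) ∂μ)
      (-c * ∫ t, g t * exp (c * (t - s)) ∂μ) s := by
  simp_rw [integral_mul_cexp_mul_sub g c]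
  have hexp : HasDerivAt (fun z : ℂ => exp (-c * z)) (exp (-c * s) * -c) s :=
    ((hasDerivAt_id (s : ℂ)).const_mul (-c)).cexp.congr_deriv (by simp)
  exact (hexp.comp_ofReal.const_mul _).congr_deriv (by ring)

end Translation

theorem W2_hyperbolic_pde_general (f : SchwartzMap ℝ ℂ) (a b : ℝ) :
    HasDerivAt
      (fun b' : ℝ => -(1 / (2 * (Real.pi : ℂ) * a ^ 2)) *
        ∫ t : ℝ, f t * Complex.exp (Real.pi * Complex.I * (t - b') / a))
      (-(Real.pi * Complex.I / a) *
        (-(1 / (2 * (Real.pi : ℂ) * a ^ 2)) *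
          ∫ t : ℝ, f t * Complex.exp (Real.pi * Complex.I * (t - b) / a))) b := by
  have hphase : ∀ t s : ℝ, (π * I * (t - s) / a : ℂ) = π * I / a * (t - s) := fun _ _ => by ring
  simp_rw [hphase]
  exact ((hasDerivAt_integral_mul_cexp_mul_sub (μ := volume) f (π * I / a) b).const_mul _).congr_deriv
    (by ring)

/-- **Hyperbolic PDE for `W₂`.**
For a Schwartz function `f`, let `D(a,b) = ∂W₂/∂a (a,b) = −(1/(2π a²))·∫ f(t)·e^{πi(t−b)/a} dt`.
Then for every `a > 0` and `b ∈ ℝ`, `D` is differentiable in `b` with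
`∂D/∂b (a,b) = −(πi/a)·D(a,b)`, i.e. `∂²W₂/(∂a∂b) + (πi/a)·∂W₂/∂a = 0`. -/
theorem W2_hyperbolic_pde (f : SchwartzMap ℝ ℂ) (a b : ℝ) (ha : 0 < a) :
    HasDerivAt
      (fun b' : ℝ => -(1 / (2 * (Real.pi : ℂ) * a ^ 2)) *
        ∫ t : ℝ, f t * Complex.exp (Real.pi * Complex.I * (t - b') / a))
      (-(Real.pi * Complex.I / a) *
        (-(1 / (2 * (Real.pi : ℂ) * a ^ 2)) *
          ∫ t : ℝ, f t * Complex.exp (Real.pi * Complex.I * (t - b) / a))) b :=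
  W2_hyperbolic_pde_general f a b
end

section
/- Riemann-method representation: fix R ∈ ℂ, k > 0, 0 < a₀ < a₁ and b₀ ∈ ℝ. Let u be twice continuously differentiable on an open set containing the closed triangle T = {(a,b) : a₀ ≤ a ≤ a₁, b₀ ≤ b ≤ b₀ + k·(a₁ − a)} and satisfy a·∂²u/(∂a∂b) + R·∂u/∂a = 0 there. Let v(a,b) = exp(R·(b − b₀)/a), and set P = (a₀, b₀ + k·(a₁ − a₀)) and Q = (a₁, b₀) (the intersections of the line b = b₀ + k·(a₁ − a) with the characteristics a = a₀ and b = b₀ through M = (a₀, b₀)). Then u(a₀, b₀) = (1/2)·[(u·v)(P) + (u·v)(Q)] + (1/2)·∫_{a₁}^{a₀} [ (v·∂u/∂a − u·∂v/∂a) + k·( v·∂u/∂b − u·∂v/∂b + (2R/a)·u·v ) ](a, b₀ + k·(a₁ − a)) da. -/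
/-!
Since `∂_b v = (R/a) v`, the equation `a ∂²u/∂a∂b + R ∂u/∂a = 0` says exactly that `v ∂u/∂a` is
constant along each characteristic `a = const`, so `(v ∂u/∂a)(a, b) = ∂u/∂a (a, b₀)` (as `v = 1`
on `b = b₀`). Using this and `∂_b v = (R/a) v` once more, the integrand along the segment `QP`
becomes `2 ∂u/∂a (a, b₀) − d/da [(u v)(a, b₀ + k(a₁ − a))]` (the `u ∂v/∂a` terms cancel), and
the fundamental theorem of calculus on `[a₀, a₁]` turns its integral into
`2 (u(M) − u(Q)) − (u v)(P) + (u v)(Q)`.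
-/

open Complex intervalIntegral Set Function

noncomputable def riemannV (R : ℂ) (b₀ : ℝ) (a b : ℝ) : ℂ :=
  Complex.exp (R * ((b : ℂ) - (b₀ : ℂ)) / (a : ℂ))

section Partials

variable {E : Type*} [NormedAddCommGroup E] [NormedSpace ℝ E] {f : ℝ → ℝ → E}

theorem hasDerivAt_partial_fst {p : ℝ × ℝ} (hf : DifferentiableAt ℝ (uncurry f) p) :
    HasDerivAt (fun s => f s p.2) (fderiv ℝ (uncurry f) p (1, 0)) p.1 :=
  hf.hasFDerivAt.comp_hasDerivAt (x := p.1) (f := fun s => (s, p.2))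
    ((hasDerivAt_id p.1).prodMk (hasDerivAt_const p.1 p.2))

theorem hasDerivAt_partial_snd {p : ℝ × ℝ} (hf : DifferentiableAt ℝ (uncurry f) p) :
    HasDerivAt (fun t => f p.1 t) (fderiv ℝ (uncurry f) p (0, 1)) p.2 :=
  hf.hasFDerivAt.comp_hasDerivAt (x := p.2) (f := fun t => (p.1, t))
    ((hasDerivAt_const p.2 p.1).prodMk (hasDerivAt_id p.2))

theorem hasDerivAt_comp_graph {g : ℝ → ℝ} {g' x : ℝ}
    (hf : DifferentiableAt ℝ (uncurry f) (x, g x)) (hg : HasDerivAt g g' x) :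
    HasDerivAt (fun t => f t (g t))
      (deriv (fun s => f s (g x)) x + g' • deriv (fun t => f x t) (g x)) x := by
  have h : HasDerivAt (fun t => f t (g t)) (fderiv ℝ (uncurry f) (x, g x) (1, g')) x :=
    hf.hasFDerivAt.comp_hasDerivAt (f := fun t => (t, g t)) x ((hasDerivAt_id x).prodMk hg)
  rw [(hasDerivAt_partial_fst hf).deriv, (hasDerivAt_partial_snd hf).deriv, ← map_smul,
    ← map_add]
  convert h using 2
  ext <;> simp

theorem ContDiffOn.contDiffOn_deriv_fst {V : Set (ℝ × ℝ)} {n : WithTop ℕ∞}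
    (hf : ContDiffOn ℝ (n + 1) (uncurry f) V) (hV : IsOpen V) :
    ContDiffOn ℝ n (fun p : ℝ × ℝ => deriv (fun s => f s p.2) p.1) V :=
  ((hf.fderiv_of_isOpen hV le_rfl).clm_apply contDiffOn_const).congr fun p hp =>
    (hasDerivAt_partial_fst ((hf.differentiableOn (by simp)).differentiableAt
      (hV.mem_nhds hp))).deriv

theorem ContDiffOn.contDiffOn_deriv_snd {V : Set (ℝ × ℝ)} {n : WithTop ℕ∞}
    (hf : ContDiffOn ℝ (n + 1) (uncurry f) V) (hV : IsOpen V) :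
    ContDiffOn ℝ n (fun p : ℝ × ℝ => deriv (fun t => f p.1 t) p.2) V :=
  ((hf.fderiv_of_isOpen hV le_rfl).clm_apply contDiffOn_const).congr fun p hp =>
    (hasDerivAt_partial_snd ((hf.differentiableOn (by simp)).differentiableAt
      (hV.mem_nhds hp))).deriv

end Partials

theorem riemannV_self (R : ℂ) (b₀ a : ℝ) : riemannV R b₀ a b₀ = 1 := by
  simp [riemannV]

theorem hasDerivAt_riemannV_snd (R : ℂ) (b₀ a b : ℝ) :
    HasDerivAt (fun t => riemannV R b₀ a t) (R / a * riemannV R b₀ a b) b := by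
  have h : HasDerivAt (fun t : ℝ => R * ((t : ℂ) - b₀) / a) (R / a) b := by
    simpa using ((((hasDerivAt_id b).ofReal_comp).sub_const (b₀ : ℂ)).const_mul R).div_const
      (a : ℂ)
  rw [mul_comm]
  exact h.cexp

theorem contDiffOn_riemannV (R : ℂ) (b₀ : ℝ) {n : WithTop ℕ∞} :
    ContDiffOn ℝ n (uncurry (riemannV R b₀)) {p | p.1 ≠ 0} := by
  have hofReal : ContDiff ℝ n (fun x : ℝ => (x : ℂ)) := ofRealCLM.contDiff
  have h : uncurry (riemannV R b₀) = fun p => cexp (R * ((p.2 : ℂ) - b₀) * (p.1 : ℂ)⁻¹) := by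
    funext p
    exact congrArg cexp (div_eq_mul_inv _ _)
  rw [h]
  fun_prop (disch := intro p hp; simpa using hp)

theorem riemannV_mul_eq_of_hasDerivAt {R : ℂ} {a b₀ b : ℝ} {w w' : ℝ → ℂ} (ha : a ≠ 0)
    (hw : ∀ y ∈ uIcc b₀ b, HasDerivAt w (w' y) y)
    (hode : ∀ y ∈ uIcc b₀ b, a * w' y + R * w y = 0) :
    riemannV R b₀ a b * w b = w b₀ := by
  have hzero : ∀ y ∈ uIcc b₀ b, HasDerivAt (fun t => riemannV R b₀ a t * w t) 0 y := by
    intro y hy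
    refine ((hasDerivAt_riemannV_snd R b₀ a y).mul (hw y hy)).congr_deriv ?_
    have ha' : (a : ℂ) ≠ 0 := ofReal_ne_zero.mpr ha
    field_simp
    linear_combination riemannV R b₀ a y * hode y hy
  have h := integral_eq_sub_of_hasDerivAt hzero intervalIntegrable_const
  rw [integral_zero, riemannV_self, one_mul] at h
  linear_combination -h

/-- The integrand of the representation at the point `(a, b)`, for a boundary of slope `-k`. -/
noncomputable def riemannForm (R : ℂ) (k b₀ : ℝ) (u : ℝ → ℝ → ℂ) (a b : ℝ) : ℂ :=
  (riemannV R b₀ a b * deriv (fun a' : ℝ => u a' b) a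
      - u a b * deriv (fun a' : ℝ => riemannV R b₀ a' b) a)
    + (k : ℂ) *
      (riemannV R b₀ a b * deriv (fun b' : ℝ => u a b') b
        - u a b * deriv (fun b' : ℝ => riemannV R b₀ a b') b
        + (2 * R / (a : ℂ)) * u a b * riemannV R b₀ a b)

def SolvesRiemannPDEOn (R : ℂ) (V : Set (ℝ × ℝ)) (u : ℝ → ℝ → ℂ) : Prop :=
  ∀ p ∈ V, (p.1 : ℂ) * deriv (fun b' : ℝ => deriv (fun a' : ℝ => u a' b') p.1) p.2
    + R * deriv (fun a' : ℝ => u a' p.2) p.1 = 0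

section RiemannMethod

variable {R : ℂ} {V : Set (ℝ × ℝ)} {u : ℝ → ℝ → ℂ}

theorem riemannV_mul_deriv_fst_eq (hV : IsOpen V) (hu : ContDiffOn ℝ 2 (uncurry u) V)
    (hpde : SolvesRiemannPDEOn R V u)
    {a b₀ b : ℝ} (ha : a ≠ 0) (hseg : ∀ y ∈ uIcc b₀ b, (a, y) ∈ V) :
    riemannV R b₀ a b * deriv (fun s => u s b) a = deriv (fun s => u s b₀) a := by
  have hua : ContDiffOn ℝ 1 (uncurry fun x y => deriv (fun s => u s y) x) V :=
    ContDiffOn.contDiffOn_deriv_fst (n := 1) hu hV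
  refine riemannV_mul_eq_of_hasDerivAt ha (fun y hy => ?_) (fun y hy => hpde _ (hseg y hy))
  exact (hasDerivAt_partial_snd (p := (a, y)) ((hua.differentiableOn one_ne_zero).differentiableAt
    (hV.mem_nhds (hseg y hy)))).differentiableAt.hasDerivAt

theorem continuousOn_riemannForm (k b₀ : ℝ) (hV : IsOpen V) (hu : ContDiffOn ℝ 1 (uncurry u) V) :
    ContinuousOn (uncurry (riemannForm R k b₀ u)) (V ∩ {p | p.1 ≠ 0}) := by
  have hA : IsOpen {p : ℝ × ℝ | p.1 ≠ 0} := isOpen_ne_fun continuous_fst continuous_const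
  have hv := contDiffOn_riemannV R b₀ (n := 1)
  have hv₀ : ContinuousOn (fun p : ℝ × ℝ => riemannV R b₀ p.1 p.2) (V ∩ {p | p.1 ≠ 0}) :=
    hv.continuousOn.mono inter_subset_right
  have hva : ContinuousOn (fun p : ℝ × ℝ => deriv (fun s => riemannV R b₀ s p.2) p.1)
      (V ∩ {p | p.1 ≠ 0}) :=
    (ContDiffOn.contDiffOn_deriv_fst (n := 0) hv hA).continuousOn.mono inter_subset_right
  have hvb : ContinuousOn (fun p : ℝ × ℝ => deriv (fun t => riemannV R b₀ p.1 t) p.2)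
      (V ∩ {p | p.1 ≠ 0}) :=
    (ContDiffOn.contDiffOn_deriv_snd (n := 0) hv hA).continuousOn.mono inter_subset_right
  have hu₀ : ContinuousOn (fun p : ℝ × ℝ => u p.1 p.2) (V ∩ {p | p.1 ≠ 0}) :=
    hu.continuousOn.mono inter_subset_left
  have hua : ContinuousOn (fun p : ℝ × ℝ => deriv (fun s => u s p.2) p.1) (V ∩ {p | p.1 ≠ 0}) :=
    (ContDiffOn.contDiffOn_deriv_fst (n := 0) hu hV).continuousOn.mono inter_subset_left
  have hub : ContinuousOn (fun p : ℝ × ℝ => deriv (fun t => u p.1 t) p.2) (V ∩ {p | p.1 ≠ 0}) :=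
    (ContDiffOn.contDiffOn_deriv_snd (n := 0) hu hV).continuousOn.mono inter_subset_left
  have hcoef : ContinuousOn (fun p : ℝ × ℝ => 2 * R / (p.1 : ℂ)) (V ∩ {p | p.1 ≠ 0}) :=
    continuousOn_const.div (by fun_prop) fun p hp => ofReal_ne_zero.mpr hp.2
  show ContinuousOn (fun p : ℝ × ℝ => riemannForm R k b₀ u p.1 p.2) _
  unfold riemannForm
  fun_prop

theorem hasDerivAt_riemannForm_primitive (hV : IsOpen V) (hu : ContDiffOn ℝ 2 (uncurry u) V)
    (hpde : SolvesRiemannPDEOn R V u)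
    {k b₀ a : ℝ} {g : ℝ → ℝ} (ha : a ≠ 0) (hg : HasDerivAt g (-k) a)
    (hseg : ∀ y ∈ uIcc b₀ (g a), (a, y) ∈ V) :
    HasDerivAt (fun t => 2 * u t b₀ - u t (g t) * riemannV R b₀ t (g t))
      (riemannForm R k b₀ u a (g a)) a := by
  have hdu : ∀ p ∈ V, DifferentiableAt ℝ (uncurry u) p := fun p hp =>
    (hu.differentiableOn two_ne_zero).differentiableAt (hV.mem_nhds hp)
  have hdv : DifferentiableAt ℝ (uncurry (riemannV R b₀)) (a, g a) :=
    ((contDiffOn_riemannV R b₀ (n := 1)).differentiableOn one_ne_zero).differentiableAt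
      ((isOpen_ne_fun continuous_fst continuous_const).mem_nhds ha)
  have hub₀ := (hasDerivAt_partial_fst (p := (a, b₀))
    (hdu _ (hseg b₀ left_mem_uIcc))).differentiableAt.hasDerivAt
  have huv := (hasDerivAt_comp_graph (hdu _ (hseg (g a) right_mem_uIcc)) hg).mul
    (hasDerivAt_comp_graph hdv hg)
  refine ((hub₀.const_mul 2).sub huv).congr_deriv ?_
  rw [riemannForm, (hasDerivAt_riemannV_snd R b₀ a (g a)).deriv,
    ← riemannV_mul_deriv_fst_eq hV hu hpde ha hseg]
  simp only [real_smul]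
  push_cast
  ring

end RiemannMethod

/-- **Riemann-method representation.**
Fix `R ∈ ℂ`, `k > 0`, `0 < a₀ < a₁` and `b₀ ∈ ℝ`. Let `u` be `C²` on an open set containing
the closed triangle `T = {(a,b) : a₀ ≤ a ≤ a₁, b₀ ≤ b ≤ b₀ + k(a₁ − a)}` and satisfy
`a·∂²u/(∂a∂b) + R·∂u/∂a = 0` there. With `v(a,b) = exp(R(b − b₀)/a)`,
`P = (a₀, b₀ + k(a₁ − a₀))` and `Q = (a₁, b₀)`, one has
`u(a₀,b₀) = (1/2)[(uv)(P) + (uv)(Q)]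
  + (1/2)∫_{a₁}^{a₀} [(v·u_a − u·v_a) + k(v·u_b − u·v_b + (2R/a)·u·v)](a, b₀ + k(a₁ − a)) da`. -/
theorem riemann_method_representation (R : ℂ) (k : ℝ) (hk : 0 < k)
    (a₀ a₁ : ℝ) (ha₀ : 0 < a₀) (ha₀₁ : a₀ < a₁) (b₀ : ℝ)
    (V : Set (ℝ × ℝ)) (hV : IsOpen V)
    (hTV : {p : ℝ × ℝ | a₀ ≤ p.1 ∧ p.1 ≤ a₁ ∧ b₀ ≤ p.2 ∧ p.2 ≤ b₀ + k * (a₁ - p.1)} ⊆ V)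
    (u : ℝ → ℝ → ℂ) (hu : ContDiffOn ℝ 2 (fun p : ℝ × ℝ => u p.1 p.2) V)
    (hpde : ∀ p ∈ V,
      (p.1 : ℂ) * deriv (fun b' : ℝ => deriv (fun a' : ℝ => u a' b') p.1) p.2
        + R * deriv (fun a' : ℝ => u a' p.2) p.1 = 0) :
    u a₀ b₀
      = (1 / 2 : ℂ) * (u a₀ (b₀ + k * (a₁ - a₀)) * riemannV R b₀ a₀ (b₀ + k * (a₁ - a₀))
          + u a₁ b₀ * riemannV R b₀ a₁ b₀)
        + (1 / 2 : ℂ) * ∫ a in a₁..a₀,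
            ((riemannV R b₀ a (b₀ + k * (a₁ - a)) *
                  deriv (fun a' : ℝ => u a' (b₀ + k * (a₁ - a))) a
                - u a (b₀ + k * (a₁ - a)) *
                  deriv (fun a' : ℝ => riemannV R b₀ a' (b₀ + k * (a₁ - a))) a)
              + (k : ℂ) *
                (riemannV R b₀ a (b₀ + k * (a₁ - a)) *
                    deriv (fun b' : ℝ => u a b') (b₀ + k * (a₁ - a))
                  - u a (b₀ + k * (a₁ - a)) *
                    deriv (fun b' : ℝ => riemannV R b₀ a b') (b₀ + k * (a₁ - a))
                  + (2 * R / (a : ℂ)) * u a (b₀ + k * (a₁ - a)) *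
                    riemannV R b₀ a (b₀ + k * (a₁ - a)))) := by
  have hIcc : uIcc a₁ a₀ = Icc a₀ a₁ := uIcc_of_ge ha₀₁.le
  have hne : ∀ a ∈ uIcc a₁ a₀, a ≠ 0 := fun a ha => by
    rw [hIcc] at ha
    exact (ha₀.trans_le ha.1).ne'
  have hseg : ∀ a ∈ uIcc a₁ a₀, ∀ y ∈ uIcc b₀ (b₀ + k * (a₁ - a)), (a, y) ∈ V := by
    intro a ha y hy
    rw [hIcc] at ha
    rw [uIcc_of_le (by nlinarith [ha.2])] at hy
    exact hTV ⟨ha.1, ha.2, hy.1, hy.2⟩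
  have hline : ∀ a, HasDerivAt (fun t => b₀ + k * (a₁ - t)) (-k) a := fun a =>
    ((((hasDerivAt_id a).const_sub a₁).const_mul k).const_add b₀).congr_deriv (by ring)
  have hmaps : MapsTo (fun a => (a, b₀ + k * (a₁ - a))) (uIcc a₁ a₀) (V ∩ {p | p.1 ≠ 0}) :=
    fun a ha => ⟨hseg a ha _ right_mem_uIcc, hne a ha⟩
  have hcont := (continuousOn_riemannForm (R := R) k b₀ hV (hu.of_le (by norm_num))).comp
    (by fun_prop) hmaps
  have hFTC := integral_eq_sub_of_hasDerivAt
    (fun a ha => hasDerivAt_riemannForm_primitive hV hu hpde (hne a ha) (hline a) (hseg a ha))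
    hcont.intervalIntegrable
  simp only [riemannForm] at hFTC
  rw [hFTC]
  simp only [sub_self, mul_zero, add_zero, riemannV_self, mul_one]
  ring
end

section
/- For every real μ ≠ 0 and every b ∈ ℝ, the symmetric principal-value Fourier integral of the Cauchy kernel satisfies: the limit as ε → 0⁺ of ∫_{ε ≤ |t − b| ≤ 1/ε} e^{iμt}/(t − b) dt exists and equals iπ·sgn(μ)·e^{iμb}, where sgn(μ) = 1 if μ > 0 and sgn(μ) = −1 if μ < 0. -/
/-!
Pairing the points `b + s` and `b - s` of the truncated domain `ε ≤ |t - b| ≤ 1/ε` keeps only the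
odd part of `e^{iμs}/s`, so the truncated integral is `2i e^{iμb} ∫_ε^{1/ε} sin(μs)/s ds`, and the
substitution `v = μs` turns this into `2i e^{iμb} ∫_{με}^{μ/ε} sinc v dv`. The Dirichlet integral
`∫_0^R sinc → π/2` follows from `sinc u = ∫_0^∞ e^{-ut} sin u dt` and Fubini:
`∫_0^R sinc = π/2 - ∫_0^∞ e^{-Rt} (t sin R + cos R)/(1 + t²) dt`, and the last integral is at most
`∫_0^∞ e^{-Rt} dt = 1/R` in absolute value.
-/

open Real Complex MeasureTheory Filter Set
open scoped Topology

lemma integral_Ioi_exp_neg_mul {c : ℝ} (hc : 0 < c) : ∫ t in Ioi 0, rexp (-c * t) = c⁻¹ := by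
  simpa using integral_exp_mul_Ioi (neg_neg_of_pos hc) 0

lemma integral_exp_neg_mul_mul_sin (t R : ℝ) :
    ∫ u in 0..R, rexp (-u * t) * Real.sin u
      = (1 - rexp (-R * t) * (t * Real.sin R + Real.cos R)) / (1 + t ^ 2) := by
  have hpos : (0 : ℝ) < 1 + t ^ 2 := by positivity
  have hderiv (u : ℝ) :
      HasDerivAt (fun u => -(rexp (-u * t) * (t * Real.sin u + Real.cos u)) / (1 + t ^ 2))
        (rexp (-u * t) * Real.sin u) u := by
    have hlin : HasDerivAt (fun u => -u * t) (-t) u := by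
      simpa using (hasDerivAt_neg u).mul_const t
    refine ((hlin.exp.mul (((Real.hasDerivAt_sin u).const_mul t).add
      (Real.hasDerivAt_cos u))).neg.div_const (1 + t ^ 2)).congr_deriv ?_
    simp only [Pi.add_apply]
    field_simp
    ring
  rw [intervalIntegral.integral_eq_sub_of_hasDerivAt (fun u _ => hderiv u)
    (by apply Continuous.intervalIntegrable; fun_prop)]
  simp only [neg_zero, zero_mul, Real.exp_zero, Real.sin_zero, Real.cos_zero]
  ring

lemma integrable_exp_neg_mul_mul_sin (R : ℝ) :
    Integrable (Function.uncurry fun u t : ℝ => rexp (-u * t) * Real.sin u)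
      ((volume.restrict (Ioc 0 R)).prod (volume.restrict (Ioi 0))) := by
  have hmeas : AEStronglyMeasurable (Function.uncurry fun u t : ℝ => rexp (-u * t) * Real.sin u)
      ((volume.restrict (Ioc 0 R)).prod (volume.restrict (Ioi 0))) := by
    apply Continuous.aestronglyMeasurable
    fun_prop
  refine (integrable_prod_iff hmeas).2 ⟨?_, ?_⟩
  · filter_upwards [ae_restrict_mem measurableSet_Ioc] with u hu
    simpa only [Function.uncurry_apply_pair] using
      (integrableOn_exp_mul_Ioi (neg_neg_of_pos hu.1) 0).mul_const (Real.sin u)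
  · refine (integrable_const (1 : ℝ)).mono' hmeas.norm.integral_prod_right' ?_
    filter_upwards [ae_restrict_mem measurableSet_Ioc] with u hu
    have hnorm : ∫ t in Ioi 0, ‖rexp (-u * t) * Real.sin u‖ = |Real.sin u| / u := by
      simp only [norm_mul, Real.norm_eq_abs, Real.abs_exp]
      rw [integral_mul_const, integral_Ioi_exp_neg_mul hu.1, inv_mul_eq_div]
    simp only [Function.uncurry_apply_pair]
    rw [hnorm, Real.norm_eq_abs, abs_of_nonneg (div_nonneg (abs_nonneg _) hu.1.le),
      div_le_one hu.1]
    exact abs_sin_le_abs.trans_eq (abs_of_pos hu.1)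

lemma abs_exp_neg_mul_mul_div_le (R t : ℝ) :
    |rexp (-R * t) * (t * Real.sin R + Real.cos R) / (1 + t ^ 2)| ≤ rexp (-R * t) := by
  have hpos : (0 : ℝ) < 1 + t ^ 2 := by positivity
  have hcs : |t * Real.sin R + Real.cos R| ≤ 1 + t ^ 2 := by
    refine abs_le_of_sq_le_sq ?_ hpos.le
    -- `(t sin R + cos R)² + (t cos R - sin R)² = 1 + t² ≤ (1 + t²)²`
    nlinarith [Real.sin_sq_add_cos_sq R, sq_nonneg (t * Real.cos R - Real.sin R), sq_nonneg t]
  rw [abs_div, abs_mul, Real.abs_exp, abs_of_pos hpos, div_le_iff₀ hpos]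
  exact mul_le_mul_of_nonneg_left hcs (Real.exp_nonneg _)

lemma integrableOn_exp_neg_mul_mul_div {R : ℝ} (hR : 0 < R) :
    IntegrableOn (fun t => rexp (-R * t) * (t * Real.sin R + Real.cos R) / (1 + t ^ 2))
      (Ioi 0) := by
  refine (integrableOn_exp_mul_Ioi (neg_neg_of_pos hR) 0).mono' ?_ ?_
  · apply Continuous.aestronglyMeasurable
    fun_prop (disch := intro t; positivity)
  · exact ae_of_all _ fun t => abs_exp_neg_mul_mul_div_le R t

lemma integral_sinc_eq_pi_div_two_sub {R : ℝ} (hR : 0 < R) :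
    ∫ u in 0..R, sinc u
      = π / 2 - ∫ t in Ioi 0, rexp (-R * t) * (t * Real.sin R + Real.cos R) / (1 + t ^ 2) := by
  have hinner (u : ℝ) (hu : 0 < u) : ∫ t in Ioi 0, rexp (-u * t) * Real.sin u = sinc u := by
    rw [integral_mul_const, integral_Ioi_exp_neg_mul hu, sinc_of_ne_zero hu.ne', inv_mul_eq_div]
  calc ∫ u in 0..R, sinc u
      = ∫ u in Ioc 0 R, ∫ t in Ioi 0, rexp (-u * t) * Real.sin u := by
        rw [intervalIntegral.integral_of_le hR.le]
        exact setIntegral_congr_fun measurableSet_Ioc fun u hu => (hinner u hu.1).symm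
    _ = ∫ t in Ioi 0, ∫ u in Ioc 0 R, rexp (-u * t) * Real.sin u :=
        integral_integral_swap (integrable_exp_neg_mul_mul_sin R)
    _ = ∫ t in Ioi 0, ((1 + t ^ 2)⁻¹
          - rexp (-R * t) * (t * Real.sin R + Real.cos R) / (1 + t ^ 2)) := by
        refine setIntegral_congr_fun measurableSet_Ioi fun t _ => ?_
        rw [← intervalIntegral.integral_of_le hR.le, integral_exp_neg_mul_mul_sin, sub_div,
          one_div]
    _ = π / 2 - ∫ t in Ioi 0, rexp (-R * t) * (t * Real.sin R + Real.cos R) / (1 + t ^ 2) := by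
        rw [integral_sub integrable_inv_one_add_sq.integrableOn
          (integrableOn_exp_neg_mul_mul_div hR), integral_Ioi_inv_one_add_sq, arctan_zero,
          sub_zero]

lemma abs_integral_sinc_sub_pi_div_two_le {R : ℝ} (hR : 0 < R) :
    |(∫ u in 0..R, sinc u) - π / 2| ≤ R⁻¹ := by
  rw [integral_sinc_eq_pi_div_two_sub hR, sub_sub_cancel_left, abs_neg,
    ← integral_Ioi_exp_neg_mul hR, ← Real.norm_eq_abs]
  refine norm_integral_le_of_norm_le (integrableOn_exp_mul_Ioi (neg_neg_of_pos hR) 0)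
    (ae_of_all _ fun t => ?_)
  exact abs_exp_neg_mul_mul_div_le R t

lemma tendsto_integral_sinc_atTop :
    Tendsto (fun R => ∫ u in 0..R, sinc u) atTop (𝓝 (π / 2)) := by
  rw [tendsto_iff_norm_sub_tendsto_zero]
  refine squeeze_zero_norm' ?_ tendsto_inv_atTop_zero
  filter_upwards [eventually_gt_atTop 0] with R hR
  rw [norm_norm]
  exact abs_integral_sinc_sub_pi_div_two_le hR

lemma tendsto_integral_sinc_atBot :
    Tendsto (fun R => ∫ u in 0..R, sinc u) atBot (𝓝 (-(π / 2))) := by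
  have hneg (R : ℝ) : ∫ u in 0..R, sinc u = -∫ u in 0..-R, sinc u := by
    have hreflect := intervalIntegral.integral_comp_neg (a := 0) (b := -R) sinc
    simp only [sinc_neg, neg_neg, neg_zero] at hreflect
    rw [hreflect, intervalIntegral.integral_symm]
  exact (tendsto_integral_sinc_atTop.comp tendsto_neg_atBot_atTop).neg.congr fun R => (hneg R).symm

lemma integral_sin_mul_div_eq_integral_sinc (c : ℝ) {a b : ℝ} (ha : 0 < a) (hb : 0 < b) :
    ∫ s in a..b, Real.sin (c * s) / s = ∫ v in c * a..c * b, sinc v := by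
  rw [← intervalIntegral.smul_integral_comp_mul_left, smul_eq_mul,
    ← intervalIntegral.integral_const_mul]
  refine intervalIntegral.integral_congr fun s hs => ?_
  have hs0 : s ≠ 0 := (lt_of_lt_of_le (lt_min ha hb) hs.1).ne'
  rcases eq_or_ne c 0 with rfl | hc
  · simp
  · rw [sinc_of_ne_zero (mul_ne_zero hc hs0)]
    field_simp

lemma tendsto_integral_sin_mul_div {μ : ℝ} (hμ : μ ≠ 0) :
    Tendsto (fun ε => ∫ s in ε..1 / ε, Real.sin (μ * s) / s) (𝓝[>] 0)
      (𝓝 ((if 0 < μ then 1 else -1) * (π / 2))) := by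
  have hsinc (a b : ℝ) : IntervalIntegrable sinc volume a b :=
    continuous_sinc.intervalIntegrable a b
  have hlower : Tendsto (fun ε => ∫ v in 0..μ * ε, sinc v) (𝓝[>] 0) (𝓝 0) := by
    have hcont : Tendsto (fun ε => ∫ v in 0..μ * ε, sinc v) (𝓝 0)
        (𝓝 (∫ v in 0..μ * 0, sinc v)) :=
      ((intervalIntegral.continuous_primitive hsinc 0).comp (continuous_const_mul μ)).tendsto 0
    rw [mul_zero, intervalIntegral.integral_same] at hcont
    exact hcont.mono_left nhdsWithin_le_nhds
  have hupper : Tendsto (fun ε => ∫ v in 0..μ * (1 / ε), sinc v) (𝓝[>] 0)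
      (𝓝 ((if 0 < μ then 1 else -1) * (π / 2))) := by
    have hinv : Tendsto (fun ε : ℝ => 1 / ε) (𝓝[>] 0) atTop := by
      simpa using tendsto_inv_nhdsGT_zero
    rcases hμ.lt_or_gt with hneg | hpos
    · rw [if_neg hneg.not_gt, neg_one_mul]
      exact tendsto_integral_sinc_atBot.comp (hinv.const_mul_atTop_of_neg hneg)
    · rw [if_pos hpos, one_mul]
      exact tendsto_integral_sinc_atTop.comp (hinv.const_mul_atTop hpos)
  have hdiff := hupper.sub hlower
  rw [sub_zero] at hdiff
  refine hdiff.congr' ?_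
  filter_upwards [self_mem_nhdsWithin] with ε hε
  rw [integral_sin_mul_div_eq_integral_sinc μ hε (one_div_pos.2 hε),
    intervalIntegral.integral_interval_sub_left (hsinc _ _) (hsinc _ _)]

lemma setOf_le_abs_sub_le_eq_union {b ε R : ℝ} (hε : 0 ≤ ε) :
    {t : ℝ | ε ≤ |t - b| ∧ |t - b| ≤ R} = Icc (b - R) (b - ε) ∪ Icc (b + ε) (b + R) := by
  ext t
  simp only [mem_ofPred_eq, mem_union, mem_Icc, le_abs, abs_le]
  constructor
  · rintro ⟨h | h, _, _⟩
    · right; constructor <;> linarith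
    · left; constructor <;> linarith
  · rintro (⟨_, _⟩ | ⟨_, _⟩)
    · exact ⟨Or.inr (by linarith), by linarith, by linarith⟩
    · exact ⟨Or.inl (by linarith), by linarith, by linarith⟩

lemma setIntegral_annulus_eq_intervalIntegral {E : Type*} [NormedAddCommGroup E]
    [NormedSpace ℝ E] {f : ℝ → E} {b ε R : ℝ} (hε : 0 < ε) (hεR : ε ≤ R)
    (hf : IntegrableOn f {t | ε ≤ |t - b| ∧ |t - b| ≤ R}) :
    ∫ t in {t | ε ≤ |t - b| ∧ |t - b| ≤ R}, f t = ∫ s in ε..R, (f (b + s) + f (b - s)) := by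
  rw [setOf_le_abs_sub_le_eq_union hε.le] at hf ⊢
  have hleft : IntervalIntegrable f volume (b - R) (b - ε) :=
    (intervalIntegrable_iff_integrableOn_Icc_of_le (by linarith)).2 (hf.mono_set subset_union_left)
  have hright : IntervalIntegrable f volume (b + ε) (b + R) :=
    (intervalIntegrable_iff_integrableOn_Icc_of_le (by linarith)).2 (hf.mono_set subset_union_right)
  have hdisj : Disjoint (Icc (b - R) (b - ε)) (Icc (b + ε) (b + R)) :=
    disjoint_left.2 fun t h₁ h₂ => by linarith [h₁.2, h₂.1]
  rw [setIntegral_union hdisj measurableSet_Icc (hf.mono_set subset_union_left)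
    (hf.mono_set subset_union_right), integral_Icc_eq_integral_Ioc,
    integral_Icc_eq_integral_Ioc, ← intervalIntegral.integral_of_le (by linarith),
    ← intervalIntegral.integral_of_le (by linarith),
    intervalIntegral.integral_add (by simpa using hright.comp_add_left b)
      (by simpa using (hleft.comp_sub_left b).symm),
    intervalIntegral.integral_comp_add_left, intervalIntegral.integral_comp_sub_left, add_comm]

-- At `s = 0` both sides are `0`, through division by zero.
lemma cexp_div_add_cexp_div_eq_sin (μ b s : ℝ) :
    cexp (I * μ * ↑(b + s)) / (↑(b + s) - b) + cexp (I * μ * ↑(b - s)) / (↑(b - s) - b)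
      = cexp (I * μ * b) * (2 * I) * ↑(Real.sin (μ * s) / s) := by
  rcases eq_or_ne s 0 with rfl | hs
  · simp
  have hs' : (s : ℂ) ≠ 0 := ofReal_ne_zero.2 hs
  have hplus : I * μ * ↑(b + s) = ↑(μ * s) * I + I * μ * b := by push_cast; ring
  have hminus : I * μ * ↑(b - s) = -↑(μ * s) * I + I * μ * b := by push_cast; ring
  rw [hplus, hminus, Complex.exp_add, Complex.exp_add, exp_mul_I, exp_mul_I, Complex.cos_neg,
    Complex.sin_neg]
  push_cast
  rw [add_sub_cancel_left, sub_sub_cancel_left]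
  field_simp
  ring

lemma integrableOn_cexp_mul_div_sub (μ b : ℝ) {ε R : ℝ} (hε : 0 < ε) :
    IntegrableOn (fun t : ℝ => cexp (I * μ * t) / (t - b)) {t | ε ≤ |t - b| ∧ |t - b| ≤ R} := by
  have hK : {t : ℝ | ε ≤ |t - b| ∧ |t - b| ≤ R} = Metric.closedBall b R \ Metric.ball b ε := by
    ext t; simp [Real.dist_eq, and_comm]
  rw [hK]
  refine ContinuousOn.integrableOn_compact ((isCompact_closedBall b R).diff Metric.isOpen_ball) ?_
  refine ContinuousOn.div (by fun_prop) (by fun_prop) fun t ht => sub_ne_zero.2 ?_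
  refine ofReal_injective.ne fun htb => ht.2 ?_
  simp [htb, hε]

lemma setIntegral_annulus_cexp_mul_div_sub (μ b : ℝ) {ε R : ℝ} (hε : 0 < ε) (hεR : ε ≤ R) :
    ∫ t in {t | ε ≤ |t - b| ∧ |t - b| ≤ R}, cexp (I * μ * t) / (t - b)
      = cexp (I * μ * b) * (2 * I) * ↑(∫ s in ε..R, Real.sin (μ * s) / s) := by
  rw [setIntegral_annulus_eq_intervalIntegral hε hεR (integrableOn_cexp_mul_div_sub μ b hε)]
  simp only [cexp_div_add_cexp_div_eq_sin]
  rw [intervalIntegral.integral_const_mul, intervalIntegral.integral_ofReal]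

/-- **Principal-value Fourier integral of the Cauchy kernel.**
For real `μ ≠ 0` and `b ∈ ℝ`, the limit as `ε → 0⁺` of
`∫_{ε ≤ |t − b| ≤ 1/ε} e^{iμt}/(t − b) dt` exists and equals `iπ·sgn(μ)·e^{iμb}`. -/
theorem pv_cauchy_kernel_fourier (μ : ℝ) (hμ : μ ≠ 0) (b : ℝ) :
    Tendsto (fun ε : ℝ =>
        ∫ t in {t : ℝ | ε ≤ |t - b| ∧ |t - b| ≤ 1 / ε},
          Complex.exp (Complex.I * μ * t) / ((t : ℂ) - b))
      (nhdsWithin 0 (Ioi 0))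
      (nhds (Complex.I * Real.pi * (if 0 < μ then 1 else -1) *
        Complex.exp (Complex.I * μ * b))) := by
  have hlim := ((continuous_ofReal.tendsto _).comp (tendsto_integral_sin_mul_div hμ)).const_mul
    (cexp (I * μ * b) * (2 * I))
  have hvalue : cexp (I * μ * b) * (2 * I) * ↑((if 0 < μ then 1 else -1) * (π / 2) : ℝ)
      = I * π * (if 0 < μ then 1 else -1) * cexp (I * μ * b) := by
    split_ifs <;> push_cast <;> ring
  rw [← hvalue]
  refine hlim.congr' ?_
  filter_upwards [Ioc_mem_nhdsGT zero_lt_one] with ε hε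
  have hεinv : ε ≤ 1 / ε := hε.2.trans (one_le_one_div hε.1 hε.2)
  exact (setIntegral_annulus_cexp_mul_div_sub μ b hε.1 hεinv).symm
end
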